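/- arXiv:2105.15025 — 3 statements merged into one kernel-verified Lean document; each statement's English description precedes it below -/
import Mathlib

section
/- For odd n ≥ 3, the Faulhaber polynomials satisfy the differential recurrence n·F_{n-1}(y) = 3·(F_n(y) + (1/2)·y·F_n'(y)), i.e., n·F_{n-1} = 3·θ_{y,1/2} F_n. -/
/-!
Differentiate `S n = S₁² · F(S₁)`. On the left, `(S n)' = n · S (n - 1) + B_n` with `B_n = 0` for
odd `n ≥ 3`; on the right, the chain rule gives `2 S₁ S₁' · (F + ½ y F')(S₁)`, and
`2 S₁ S₁' = 3 S₂`. Hence `S₂ · (n G)(S₁) = S₂ · (3 θ F)(S₁)`, and `S₂ ≠ 0` may be cancelled,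
as may composition with the nonconstant `S₁`.
-/

open Polynomial

/-- The power-sum polynomial `S n`, satisfying `S n (m) = ∑_{ν<m} ν^n`. -/
noncomputable def S (n : ℕ) : ℚ[X] :=
  C ((n : ℚ) + 1)⁻¹ * (Polynomial.bernoulli (n + 1) - C (_root_.bernoulli (n + 1)))

lemma S_one : S 1 = C (1 / 2 : ℚ) * (X ^ 2 - X) := by
  apply Polynomial.funext; intro x
  simp [S, Polynomial.bernoulli, Finset.sum_range_succ, bernoulli_two]
  ring

lemma S_two : S 2 = C (1 / 6 : ℚ) * (X * (X - 1) * (2 * X - 1)) := by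
  apply Polynomial.funext; intro x
  simp [S, Polynomial.bernoulli, Finset.sum_range_succ, bernoulli_two]
  ring

lemma derivative_S_succ (n : ℕ) :
    derivative (S (n + 1)) = C ((n : ℚ) + 1) * S n + C (_root_.bernoulli (n + 1)) := by
  simp only [S, derivative_mul, derivative_C, zero_mul, zero_add, derivative_sub,
    derivative_bernoulli_add_one, sub_zero]
  apply Polynomial.funext; intro x
  simp
  field_simp
  ring

lemma derivative_S_of_odd {n : ℕ} (hodd : Odd n) (hn : 1 < n) :
    derivative (S n) = C (n : ℚ) * S (n - 1) := by
  obtain ⟨m, rfl⟩ : ∃ m, n = m + 1 := ⟨n - 1, by omega⟩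
  rw [derivative_S_succ, bernoulli_eq_zero_of_odd hodd hn]
  simp

lemma two_mul_S_one_mul_derivative : 2 * S 1 * derivative (S 1) = 3 * S 2 := by
  apply Polynomial.funext; intro x
  simp [S_one, S_two]
  ring

lemma derivative_sq_mul_comp {K : Type*} [Field K] [NeZero (2 : K)] (p F : K[X]) :
    derivative (p ^ 2 * F.comp p) =
      2 * p * derivative p * (F + C (1 / 2 : K) * X * derivative F).comp p := by
  have h2 : (2 : K[X]) * C (1 / 2) = 1 := by
    rw [← map_ofNat C 2, ← C_mul, mul_one_div_cancel two_ne_zero, C_1]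
  rw [derivative_mul, derivative_sq, derivative_comp, map_ofNat]
  simp only [add_comp, mul_comp, C_comp, X_comp]
  linear_combination -(p ^ 2 * derivative p * (derivative F).comp p) * h2

lemma eq_of_mul_comp_eq_mul_comp {R : Type*} [Ring R] [NoZeroDivisors R] {p q f g : R[X]}
    (hp : p ≠ 0) (hq : q.natDegree ≠ 0) (h : p * f.comp q = p * g.comp q) : f = g := by
  have hcomp : (f - g).comp q = 0 := by rw [sub_comp, mul_left_cancel₀ hp h, sub_self]
  rcases comp_eq_zero_iff.mp hcomp with hfg | ⟨-, hqC⟩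
  · exact sub_eq_zero.mp hfg
  · exact absurd (natDegree_eq_zero.mpr ⟨_, hqC.symm⟩) hq

theorem faulhaber_differential_recurrence (n : ℕ) (hn : 3 ≤ n) (hodd : Odd n)
    (F G : ℚ[X])
    (hF : S n = (S 1) ^ 2 * F.comp (S 1))
    (hG : S (n - 1) = S 2 * G.comp (S 1)) :
    C (n : ℚ) * G = C 3 * (F + C (1 / 2 : ℚ) * X * derivative F) := by
  have hS1 : (S 1).natDegree ≠ 0 := by
    rw [S_one, natDegree_C_mul (by norm_num), natDegree_sub_eq_left_of_natDegree_lt] <;> simp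
  have hS2 : S 2 ≠ 0 := fun h => by
    have := congrArg (eval 2) h
    norm_num [S_two] at this
  refine eq_of_mul_comp_eq_mul_comp hS2 hS1 (calc
    S 2 * (C (n : ℚ) * G).comp (S 1) = C (n : ℚ) * S (n - 1) := by
      rw [hG, mul_comp, C_comp]; ring
    _ = derivative (S n) := (derivative_S_of_odd hodd (by omega)).symm
    _ = 3 * S 2 * (F + C (1 / 2 : ℚ) * X * derivative F).comp (S 1) := by
      rw [hF, derivative_sq_mul_comp, two_mul_S_one_mul_derivative]
    _ = S 2 * (C 3 * (F + C (1 / 2 : ℚ) * X * derivative F)).comp (S 1) := by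
      rw [mul_comp, C_comp, map_ofNat]; ring)
end

section
/- For odd n ≥ 5 and all k ≥ 0, the coefficients of the Faulhaber polynomials satisfy (n choose 2)·f_{n-2,k} = (1/2)·(2(k+3) choose 2)·f_{n,k+1} + (1/4)·((k+4) choose 2)·f_{n,k+2}, with the convention f_{m,j} = 0 for j > deg F_m. -/
open Polynomial

lemma deriv_S (n : ℕ) : derivative (S n) = Polynomial.bernoulli n := by
  rw [S, derivative_C_mul, derivative_sub, derivative_C, sub_zero,
    Polynomial.derivative_bernoulli_add_one,
    show ((n : ℚ[X]) + 1) = C ((n:ℚ)+1) by simp [map_add, map_natCast],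
    ← mul_assoc, ← C_mul, inv_mul_cancel₀ (by positivity), C_1, one_mul]

lemma bern_eq (m : ℕ) :
    Polynomial.bernoulli (m + 1) = C ((m : ℚ) + 1) * S m + C (_root_.bernoulli (m + 1)) := by
  rw [S, ← mul_assoc, ← C_mul, mul_inv_cancel₀ (by positivity), C_1, one_mul, sub_add_cancel]

lemma S1_eq : S 1 = C (1/2 : ℚ) * X ^ 2 - C (1/2 : ℚ) * X := by
  have h2 : _root_.bernoulli 2 = 1/6 := by
    rw [bernoulli_eq_bernoulli'_of_ne_one (by norm_num), bernoulli'_two]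
  rw [S, Polynomial.bernoulli]
  norm_num [Finset.sum_range_succ, h2, _root_.bernoulli_zero, _root_.bernoulli_one]
  have : ((monomial 2) (1:ℚ) + -(monomial 1) 1) = X ^ 2 - X := by
    rw [← X_pow_eq_monomial, ← Polynomial.monomial_one_one_eq_X]
    ring
  rw [this, mul_sub]

lemma dS1 : derivative (S 1) = X - C (1/2 : ℚ) := by
  rw [S1_eq, derivative_sub, derivative_C_mul, derivative_C_mul, derivative_X_pow,
    derivative_X, mul_one]
  rw [← mul_assoc, ← C_mul]
  norm_num

lemma dS1_sq : (derivative (S 1)) ^ 2 = C 2 * S 1 + C (1/4 : ℚ) := by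
  rw [dS1, S1_eq, sub_sq, show (2:ℚ[X]) = C 2 from (map_ofNat C 2).symm,
    mul_right_comm (C (2:ℚ)) X (C (1/2)), ← C_mul, ← C_pow, mul_sub, ← mul_assoc, ← C_mul]
  norm_num
  rw [← mul_assoc, ← C_mul]
  norm_num

theorem faulhaber_coeff_recurrence (n : ℕ) (hn : 5 ≤ n) (hodd : Odd n)
    (F F2 : ℚ[X])
    (hF : S n = (S 1) ^ 2 * F.comp (S 1))
    (hF2 : S (n - 2) = (S 1) ^ 2 * F2.comp (S 1))
    (k : ℕ) :
    (n.choose 2 : ℚ) * F2.coeff k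
      = 1 / 2 * ((2 * (k + 3)).choose 2 : ℚ) * F.coeff (k + 1)
        + 1 / 4 * ((k + 4).choose 2 : ℚ) * F.coeff (k + 2) := by
  obtain ⟨j, rfl⟩ : ∃ j, n = j + 5 := ⟨n - 5, by omega⟩
  clear hn hodd
  have hF2' : S (j + 3) = (S 1) ^ 2 * F2.comp (S 1) := by
    rw [show j + 3 = j + 5 - 2 by omega]; exact hF2
  set u := S 1 with hu
  set G : ℚ[X] := C 2 * (X * F) + X ^ 2 * derivative F with hG
  set H : ℚ[X] := G + C 2 * (X * derivative G) + C (1/4) * derivative G with hH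
  set a : ℚ := ((j:ℚ)+5) * ((j:ℚ)+4) with ha
  set R : ℚ[X] := C a * (X ^ 2 * F2) + C (((j:ℚ)+5) * _root_.bernoulli (j+4)) with hR
  have hddu : derivative (derivative u) = 1 := by
    rw [hu, dS1, derivative_sub, derivative_X, derivative_C, sub_zero]
  have hd1 : derivative (S (j+5)) = derivative u * G.comp u := by
    rw [hF, derivative_mul, derivative_pow, derivative_comp, hG]
    simp only [add_comp, mul_comp, C_comp, X_comp, pow_comp]
    push_cast [Nat.cast_ofNat]
    ring
  have hd2 : derivative (derivative (S (j+5))) = H.comp u := by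
    rw [hd1, derivative_mul, hddu, one_mul, derivative_comp,
      show derivative u * (derivative u * (derivative G).comp u)
        = (derivative u) ^ 2 * (derivative G).comp u by ring, hu, dS1_sq, hH]
    simp only [add_comp, mul_comp, C_comp, X_comp]
    ring
  have hd3 : derivative (derivative (S (j+5))) = R.comp u := by
    rw [deriv_S, show j + 5 = (j+4) + 1 from rfl,
      Polynomial.derivative_bernoulli_add_one, show j + 4 = (j+3) + 1 from rfl,
      bern_eq, hF2', hR]
    simp only [add_comp, mul_comp, C_comp, X_comp, pow_comp]
    rw [show ((((j:ℕ)+3+1:ℕ) : ℚ[X]) + 1) = C ((j:ℚ)+5) by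
        rw [← C_eq_natCast, ← C_1, ← C_add]; congr 1; push_cast; ring,
      show (((j+3:ℕ)) : ℚ) + 1 = (j:ℚ)+4 by push_cast; ring,
      show C a = C ((j:ℚ)+5) * C ((j:ℚ)+4) by rw [← C_mul, ha],
      show C (((j:ℚ)+5) * _root_.bernoulli (j+4)) = C ((j:ℚ)+5) * C (_root_.bernoulli (j+3+1)) by
        rw [← C_mul, show j+3+1 = j+4 from rfl]]
    ring
  have key : H = R := by
    have h0 : (H - R).comp u = 0 := by rw [sub_comp, ← hd2, ← hd3, sub_self]
    rcases comp_eq_zero_iff.mp h0 with h | h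
    · exact sub_eq_zero.mp h
    · exfalso
      have h2 := congrArg (fun p => coeff p 2) h.2
      simp only [hu, S1_eq] at h2
      simp [coeff_C] at h2
  -- coefficient computations
  have cG2 : G.coeff (k+2) = ((k:ℚ)+3) * F.coeff (k+1) := by
    rw [hG, coeff_add, coeff_C_mul, show k+2 = (k+1)+1 from rfl, coeff_X_mul,
      show (k+1)+1 = k+2 from rfl, coeff_X_pow_mul, coeff_derivative]
    push_cast; ring
  have cG3 : G.coeff (k+3) = ((k:ℚ)+4) * F.coeff (k+2) := by
    rw [hG, coeff_add, coeff_C_mul, show k+3 = (k+2)+1 from rfl, coeff_X_mul,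
      show (k+2)+1 = (k+1)+2 from rfl, coeff_X_pow_mul, coeff_derivative]
    push_cast; ring
  have cH : H.coeff (k+2)
      = G.coeff (k+2) + 2 * (((k:ℚ)+2) * G.coeff (k+2)) + 1/4 * (((k:ℚ)+3) * G.coeff (k+3)) := by
    rw [hH, coeff_add, coeff_add, coeff_C_mul, coeff_C_mul,
      show k+2 = (k+1)+1 from rfl, coeff_X_mul, coeff_derivative, coeff_derivative]
    push_cast; ring
  have cR : R.coeff (k+2) = a * F2.coeff k := by
    rw [hR, coeff_add, coeff_C_mul, show k+2 = k+2 from rfl, coeff_X_pow_mul, coeff_C]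
    simp
  have hcoeff := congrArg (fun p => coeff p (k+2)) key
  rw [cH, cG2, cG3, cR] at hcoeff
  rw [Nat.cast_choose_two, Nat.cast_choose_two, Nat.cast_choose_two]
  push_cast [Nat.cast_sub (by omega : 1 ≤ 2*(k+3)), Nat.cast_sub (by omega : 1 ≤ k+4),
    Nat.cast_sub (by omega : 1 ≤ j+5)]
  rw [ha] at hcoeff
  linear_combination -hcoeff / 2
end

section
/- For odd n ≥ 1 and every k with (n+1)/2 ≤ k ≤ n, the Bernoulli numbers satisfy Σ_{ν=0}^{k} ((2k-ν) choose k) · (n choose ν) · B_{n-ν} = 0. -/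
/-!
Put `Λₖ P = ∑_{ν ≤ k} C(2k-ν, k) [X^ν] P`. For `deg P ≤ 2k`, `Λₖ P` is the coefficient of `Y^k` in
`(1+Y)^{2k} P(Y/(1+Y))`, and substituting `1 - X` for `X` reverses that polynomial of degree `2k`,
so `Λₖ (P(1 - X)) = Λₖ P`. On monomials this is the identity `Λₖ (1-X)^m = C(2k-m, k) = Λₖ X^m`,
read off from the coefficient of `X^k` in `∑ C(m,ν) (-X)^ν (1+X)^{2k-ν} = (1+X)^{2k-m}`.
For odd `n ≤ 2k` we have `Bₙ(1 - X) = -Bₙ(X)`, hence `Λₖ Bₙ = 0`, and `[X^ν] Bₙ = C(n,ν) B_{n-ν}`.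
-/

open Finset

namespace Polynomial

variable {R : Type*} [CommRing R]

theorem sum_choose_mul_neg_X_pow_mul_one_add_X_pow {m N : ℕ} (h : m ≤ N) :
    ∑ ν ∈ range (m + 1), (m.choose ν : R[X]) * (-X) ^ ν * (1 + X) ^ (N - ν) =
      (1 + X) ^ (N - m) :=
  calc ∑ ν ∈ range (m + 1), (m.choose ν : R[X]) * (-X) ^ ν * (1 + X) ^ (N - ν)
      = (∑ ν ∈ range (m + 1), (-X) ^ ν * (1 + X) ^ (m - ν) * (m.choose ν : R[X])) *
          (1 + X) ^ (N - m) := by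
        rw [sum_mul]
        refine sum_congr rfl fun ν hν => ?_
        rw [show N - ν = (m - ν) + (N - m) by grind, pow_add]
        ring
    _ = (1 + X) ^ (N - m) := by rw [← add_pow]; ring

theorem coeff_X_pow_mul_one_add_X_pow_two_mul_sub {k ν : ℕ} (h : ν ≤ 2 * k) :
    (X ^ ν * (1 + X : R[X]) ^ (2 * k - ν)).coeff k = ((2 * k - ν).choose k : R) := by
  rw [coeff_X_pow_mul', coeff_one_add_X_pow]
  split_ifs with hν
  · rw [Nat.choose_symm_of_eq_add (show 2 * k - ν = (k - ν) + k by omega)]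
  · rw [Nat.choose_eq_zero_of_lt (by omega), Nat.cast_zero]

theorem _root_.sum_range_neg_one_pow_mul_choose_mul_choose {k m : ℕ} (hm : m ≤ 2 * k) :
    ∑ ν ∈ range (m + 1), (-1 : R) ^ ν * m.choose ν * (2 * k - ν).choose k =
      (2 * k - m).choose k := by
  have h := congrArg (coeff · k) (sum_choose_mul_neg_X_pow_mul_one_add_X_pow (R := R) hm)
  simp only [finsetSum_coeff, coeff_one_add_X_pow] at h
  rw [← h]
  refine sum_congr rfl fun ν hν => ?_
  have hterm : (m.choose ν : R[X]) * (-X) ^ ν * (1 + X) ^ (2 * k - ν) =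
      C ((-1 : R) ^ ν * m.choose ν) * (X ^ ν * (1 + X) ^ (2 * k - ν)) := by
    simp only [neg_pow (X : R[X]), map_mul, map_pow, map_neg, map_one, map_natCast]
    ring
  rw [hterm, coeff_C_mul, coeff_X_pow_mul_one_add_X_pow_two_mul_sub (by grind), mul_assoc]

noncomputable def chooseWeightedCoeffSum (k : ℕ) : R[X] →ₗ[R] R :=
  ∑ ν ∈ range (k + 1), ((2 * k - ν).choose k : R) • lcoeff R ν

theorem chooseWeightedCoeffSum_apply (k : ℕ) (P : R[X]) :
    chooseWeightedCoeffSum k P = ∑ ν ∈ range (k + 1), ((2 * k - ν).choose k : R) * P.coeff ν := by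
  simp [chooseWeightedCoeffSum]

theorem chooseWeightedCoeffSum_X_pow {k m : ℕ} (hm : m ≤ 2 * k) :
    chooseWeightedCoeffSum k (X ^ m : R[X]) = (2 * k - m).choose k := by
  simp only [chooseWeightedCoeffSum_apply, coeff_X_pow, mul_ite, mul_one, mul_zero, sum_ite_eq',
    mem_range]
  split_ifs with h
  · rfl
  · rw [Nat.choose_eq_zero_of_lt (by omega), Nat.cast_zero]

theorem one_sub_X_pow_eq_sum (m : ℕ) :
    (1 - X : R[X]) ^ m = ∑ ν ∈ range (m + 1), ((-1 : R) ^ ν * m.choose ν) • X ^ ν := by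
  rw [sub_eq_neg_add, add_pow]
  refine sum_congr rfl fun ν _ => ?_
  rw [one_pow, mul_one, neg_pow, ← C_mul', map_mul, map_pow, map_neg, map_one, map_natCast]
  ring

theorem chooseWeightedCoeffSum_one_sub_X_pow {k m : ℕ} (hm : m ≤ 2 * k) :
    chooseWeightedCoeffSum k ((1 - X : R[X]) ^ m) = (2 * k - m).choose k := by
  rw [one_sub_X_pow_eq_sum, map_sum, ← sum_range_neg_one_pow_mul_choose_mul_choose hm]
  refine sum_congr rfl fun ν hν => ?_
  rw [map_smul, chooseWeightedCoeffSum_X_pow (by grind), smul_eq_mul]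

theorem chooseWeightedCoeffSum_comp_one_sub_X {k : ℕ} {P : R[X]} (hP : P.natDegree ≤ 2 * k) :
    chooseWeightedCoeffSum k (P.comp (1 - X)) = chooseWeightedCoeffSum k P := by
  have hP' : P.natDegree < 2 * k + 1 := Nat.lt_succ_of_le hP
  conv_lhs => rw [P.as_sum_range_C_mul_X_pow' hP']
  conv_rhs => rw [P.as_sum_range_C_mul_X_pow' hP']
  simp only [C_mul', sum_comp, smul_comp, X_pow_comp, map_sum, map_smul]
  refine sum_congr rfl fun m hm => ?_
  rw [chooseWeightedCoeffSum_X_pow (by grind), chooseWeightedCoeffSum_one_sub_X_pow (by grind)]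

theorem coeff_bernoulli_eq_mul_choose (n ν : ℕ) :
    (bernoulli n).coeff ν = _root_.bernoulli (n - ν) * n.choose ν := by
  rw [coeff_bernoulli, ite_eq_left_iff]
  intro h
  rw [Nat.choose_eq_zero_of_lt (by omega), Nat.cast_zero, mul_zero]

theorem natDegree_bernoulli_le (n : ℕ) : (bernoulli n).natDegree ≤ n :=
  natDegree_le_iff_coeff_eq_zero.mpr fun _ h => by rw [coeff_bernoulli, if_neg (by omega)]

theorem chooseWeightedCoeffSum_bernoulli_eq_zero {n k : ℕ} (hn : Odd n) (hnk : n ≤ 2 * k) :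
    chooseWeightedCoeffSum k (bernoulli n) = 0 := by
  have h := chooseWeightedCoeffSum_comp_one_sub_X ((natDegree_bernoulli_le n).trans hnk)
  rwa [bernoulli_comp_one_sub_X, hn.neg_one_pow, neg_one_mul, map_neg,
    CharZero.neg_eq_self_iff] at h

end Polynomial

theorem bernoulli_symmetry_recurrence_general (n k : ℕ) (hodd : Odd n)
    (h1 : (n + 1) / 2 ≤ k) :
    ∑ ν ∈ Finset.range (k + 1),
        ((2 * k - ν).choose k : ℚ) * (n.choose ν : ℚ) * bernoulli (n - ν) = 0 := by
  have hnk : n ≤ 2 * k := by obtain ⟨j, rfl⟩ := hodd; omega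
  rw [← Polynomial.chooseWeightedCoeffSum_bernoulli_eq_zero hodd hnk,
    Polynomial.chooseWeightedCoeffSum_apply]
  refine sum_congr rfl fun ν _ => ?_
  rw [Polynomial.coeff_bernoulli_eq_mul_choose]
  ring

theorem bernoulli_symmetry_recurrence (n k : ℕ) (hodd : Odd n)
    (h1 : (n + 1) / 2 ≤ k) (h2 : k ≤ n) :
    ∑ ν ∈ Finset.range (k + 1),
        ((2 * k - ν).choose k : ℚ) * (n.choose ν : ℚ) * bernoulli (n - ν) = 0 :=
  bernoulli_symmetry_recurrence_general n k hodd h1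
end
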